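/- Every relation between classical structures is a classical morphism: if r : X ⟶ Y satisfies r = Δ_X ≫ (r_* ⊗ r) ≫ ∇_Y, then (Δ_X ⊗ 𝟙_Y) ≫ (𝟙_X ⊗ r ⊗ 𝟙_Y) ≫ (𝟙_X ⊗ ∇_Y) is positive. -/

import Mathlib

open CategoryTheory MonoidalCategory

universe v u

variable {C : Type u} [Category.{v} C] [MonoidalCategory C] [SymmetricCategory C]

/-- A dagger structure on a symmetric monoidal category: an involutive,
identity-on-objects, contravariant functor that coherently preserves the
symmetric monoidal structure. -/
structure Dagger (C : Type u) [Category.{v} C] [MonoidalCategory C]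
    [SymmetricCategory C] where
  dag : ∀ {A B : C}, (A ⟶ B) → (B ⟶ A)
  dag_comp : ∀ {A B E : C} (f : A ⟶ B) (g : B ⟶ E), dag (f ≫ g) = dag g ≫ dag f
  dag_id : ∀ A : C, dag (𝟙 A) = 𝟙 A
  dag_dag : ∀ {A B : C} (f : A ⟶ B), dag (dag f) = f
  dag_tensor : ∀ {A B A' B' : C} (f : A ⟶ B) (g : A' ⟶ B'),
    dag (f ⊗ₘ g) = dag f ⊗ₘ dag g
  dag_assoc : ∀ A B E : C, dag (α_ A B E).hom = (α_ A B E).inv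
  dag_lUnit : ∀ A : C, dag (λ_ A).hom = (λ_ A).inv
  dag_rUnit : ∀ A : C, dag (ρ_ A).hom = (ρ_ A).inv
  dag_braid : ∀ A B : C, dag (β_ A B).hom = (β_ A B).inv

/-- Positivity of an endomorphism: `e = g† ≫ g` for some `g : W ⟶ A`. -/
def Dagger.IsPositive (D : Dagger C) {A : C} (e : A ⟶ A) : Prop :=
  ∃ (W : C) (g : W ⟶ A), e = D.dag g ≫ g

/-- A classical structure: a commutative monoid object which, together with the
daggers of its multiplication and unit, is a special Frobenius algebra. -/
structure ClassicalStructure (D : Dagger C) (X : C) where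
  mul : X ⊗ X ⟶ X
  unit : 𝟙_ C ⟶ X
  mul_assoc' : (α_ X X X).hom ≫ (𝟙 X ⊗ₘ mul) ≫ mul = (mul ⊗ₘ 𝟙 X) ≫ mul
  one_mul' : (unit ⊗ₘ 𝟙 X) ≫ mul = (λ_ X).hom
  mul_one' : (𝟙 X ⊗ₘ unit) ≫ mul = (ρ_ X).hom
  mul_comm' : (β_ X X).hom ≫ mul = mul
  frobenius' : (𝟙 X ⊗ₘ D.dag mul) ≫ (α_ X X X).inv ≫ (mul ⊗ₘ 𝟙 X) = mul ≫ D.dag mul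
  special' : D.dag mul ≫ mul = 𝟙 X

namespace ClassicalStructure

variable {D : Dagger C}

/-- The comultiplication `Δ := ∇†`. -/
def comul {X : C} (S : ClassicalStructure D X) : X ⟶ X ⊗ X := D.dag S.mul

/-- The counit `⊤ := ⊥†`. -/
def counit {X : C} (S : ClassicalStructure D X) : X ⟶ 𝟙_ C := D.dag S.unit

/-- The induced Bell state `η := ⊥ ≫ Δ`. -/
def eta {X : C} (S : ClassicalStructure D X) : 𝟙_ C ⟶ X ⊗ X := S.unit ≫ S.comul

/-- The induced Bell costate `ε := ∇ ≫ ⊤`. -/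
def eps {X : C} (S : ClassicalStructure D X) : X ⊗ X ⟶ 𝟙_ C := S.mul ≫ S.counit

/-- The decoherence `Ξ := ∇ ≫ Δ`. -/
def Xi {X : C} (S : ClassicalStructure D X) : X ⊗ X ⟶ X ⊗ X := S.mul ≫ S.comul

end ClassicalStructure

/-- A morphism `f : X ⟶ Y` between classical structures is classical if
`(Δ_X ⊗ 𝟙_Y) ≫ (𝟙_X ⊗ f ⊗ 𝟙_Y) ≫ (𝟙_X ⊗ ∇_Y)` is positive. -/
def IsClassical {X Y : C} (D : Dagger C) (XS : ClassicalStructure D X)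
    (YS : ClassicalStructure D Y) (f : X ⟶ Y) : Prop :=
  D.IsPositive ((XS.comul ⊗ₘ 𝟙 Y) ≫ ((𝟙 X ⊗ₘ f) ⊗ₘ 𝟙 Y) ≫ (α_ X Y Y).hom ≫ (𝟙 X ⊗ₘ YS.mul))

/-- The conjugate `f_* := (η_Y ⊗ 𝟙_X) ≫ (𝟙_Y ⊗ f† ⊗ 𝟙_X) ≫ (𝟙_Y ⊗ ε_X)`. -/
def conjugate {X Y : C} (D : Dagger C) (XS : ClassicalStructure D X)
    (YS : ClassicalStructure D Y) (f : X ⟶ Y) : X ⟶ Y :=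
  (λ_ X).inv ≫ (YS.eta ⊗ₘ 𝟙 X) ≫ (α_ Y Y X).hom ≫ (𝟙 Y ⊗ₘ (D.dag f ⊗ₘ 𝟙 X)) ≫
    (𝟙 Y ⊗ₘ XS.eps) ≫ (ρ_ Y).hom

/-- The convolution `f ⋆ g := Δ_X ≫ (f_* ⊗ g) ≫ ∇_Y`. -/
def convol {X Y : C} (D : Dagger C) (XS : ClassicalStructure D X)
    (YS : ClassicalStructure D Y) (f g : X ⟶ Y) : X ⟶ Y :=
  XS.comul ≫ (conjugate D XS YS f ⊗ₘ g) ≫ YS.mul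

/-- A relation is a convolution-idempotent: `r = r ⋆ r`. -/
def IsRelation {X Y : C} (D : Dagger C) (XS : ClassicalStructure D X)
    (YS : ClassicalStructure D Y) (r : X ⟶ Y) : Prop :=
  r = convol D XS YS r r

/-- Single-valuedness: `r ≫ Δ_Y = Δ_X ≫ (r ⊗ r)`. -/
def SingleValued {X Y : C} (D : Dagger C) (XS : ClassicalStructure D X)
    (YS : ClassicalStructure D Y) (r : X ⟶ Y) : Prop :=
  r ≫ YS.comul = XS.comul ≫ (r ⊗ₘ r)

/-- Totality: `r ≫ ⊤_Y = ⊤_X`. -/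
def TotalRel {X Y : C} (D : Dagger C) (XS : ClassicalStructure D X)
    (YS : ClassicalStructure D Y) (r : X ⟶ Y) : Prop :=
  r ≫ YS.counit = XS.counit

/-- A function is a single-valued total relation. -/
def IsFunctionRel {X Y : C} (D : Dagger C) (XS : ClassicalStructure D X)
    (YS : ClassicalStructure D Y) (r : X ⟶ Y) : Prop :=
  IsRelation D XS YS r ∧ SingleValued D XS YS r ∧ TotalRel D XS YS r

/-- The middle-four interchange `(X ⊗ Y) ⊗ (Z ⊗ W) ⟶ (X ⊗ Z) ⊗ (Y ⊗ W)`
built from associators and the braiding. -/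
def midSwap (X Y Z W : C) : (X ⊗ Y) ⊗ (Z ⊗ W) ⟶ (X ⊗ Z) ⊗ (Y ⊗ W) :=
  (α_ X Y (Z ⊗ W)).hom ≫ (𝟙 X ⊗ₘ (α_ Y Z W).inv) ≫ (𝟙 X ⊗ₘ ((β_ Y Z).hom ⊗ₘ 𝟙 W)) ≫
    (𝟙 X ⊗ₘ (α_ Z Y W).hom) ≫ (α_ X Z (Y ⊗ W)).inv

/-- The multiplication `∇_{X⊗Y} := (𝟙_X ⊗ β_{Y,X} ⊗ 𝟙_Y) ≫ (∇_X ⊗ ∇_Y)` of the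
tensor of two classical structures. -/
def tensorMul {X Y : C} {D : Dagger C} (XS : ClassicalStructure D X)
    (YS : ClassicalStructure D Y) : (X ⊗ Y) ⊗ (X ⊗ Y) ⟶ X ⊗ Y :=
  midSwap X Y X Y ≫ (XS.mul ⊗ₘ YS.mul)

/-- The unit `⊥_{X⊗Y} := ⊥_X ⊗ ⊥_Y` of the tensor of two classical structures. -/
def tensorUnit'' {X Y : C} {D : Dagger C} (XS : ClassicalStructure D X)
    (YS : ClassicalStructure D Y) : 𝟙_ C ⟶ X ⊗ Y :=
  (λ_ (𝟙_ C)).inv ≫ (XS.unit ⊗ₘ YS.unit)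

/-- Complete positivity of `g : X ⊗ X ⟶ Y ⊗ Y` relative to the self-dual compact
structures induced by the classical structures:
`(𝟙_X ⊗ η_X ⊗ 𝟙_Y) ≫ (𝟙_X ⊗ g ⊗ 𝟙_Y) ≫ (𝟙_{X⊗Y} ⊗ ε_Y)` is positive. -/
def IsCP {X Y : C} (D : Dagger C) (XS : ClassicalStructure D X)
    (YS : ClassicalStructure D Y) (g : X ⊗ X ⟶ Y ⊗ Y) : Prop :=
  D.IsPositive ((𝟙 X ⊗ₘ (λ_ Y).inv) ≫ (𝟙 X ⊗ₘ (XS.eta ⊗ₘ 𝟙 Y)) ≫ (𝟙 X ⊗ₘ (g ⊗ₘ 𝟙 Y)) ≫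
    (𝟙 X ⊗ₘ (α_ Y Y Y).hom) ≫ (α_ X Y (Y ⊗ Y)).inv ≫ (𝟙 (X ⊗ Y) ⊗ₘ YS.eps) ≫
    (ρ_ (X ⊗ Y)).hom)

/-- A stochastic morphism: classical and total. -/
def Stochastic {X Y : C} (D : Dagger C) (XS : ClassicalStructure D X)
    (YS : ClassicalStructure D Y) (s : X ⟶ Y) : Prop :=
  IsClassical D XS YS s ∧ TotalRel D XS YS s

/-- A doubly stochastic morphism: both `s` and `s†` are stochastic. -/
def DoublyStochastic {X Y : C} (D : Dagger C) (XS : ClassicalStructure D X)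
    (YS : ClassicalStructure D Y) (s : X ⟶ Y) : Prop :=
  Stochastic D XS YS s ∧ Stochastic D YS XS (D.dag s)

/-!
Write `M f := (Δ_X ⊗ 𝟙) ≫ (𝟙 ⊗ f ⊗ 𝟙) ≫ (𝟙 ⊗ ∇_Y)` (`controlledMul`) for the endomorphism of
`X ⊗ Y` whose positivity defines classicality; in `FHilb` it is
`∑ₓ |x⟩⟨x| ⊗ (multiplication by f|x⟩)`. Coassociativity of `Δ_X` and (commutative) associativity
of `∇_Y` give `M f ≫ M g = M (Δ_X ≫ (f ⊗ g) ≫ ∇_Y)`, and the Frobenius law together with the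
symmetry of `η_Y` and `ε_X` gives `(M f)† = M f_*`. For a relation `r = Δ_X ≫ (r_* ⊗ r) ≫ ∇_Y`
this yields `M r = M r_* ≫ M r = (M r)† ≫ M r`.
-/

open BraidedCategory

theorem leftTranspose_eq_rightTranspose {X Y : C} (φ : 𝟙_ C ⟶ Y ⊗ X) (ε : X ⊗ X ⟶ 𝟙_ C)
    (hε : (β_ X X).hom ≫ ε = ε) :
    (λ_ X).inv ≫ (φ ▷ X) ≫ (α_ Y X X).hom ≫ (Y ◁ ε) ≫ (ρ_ Y).hom =
      (ρ_ X).inv ≫ (X ◁ (φ ≫ (β_ Y X).hom)) ≫ (α_ X X Y).inv ≫ (ε ▷ Y) ≫ (λ_ Y).hom := by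
  have hexagons : (α_ Y X X).hom ≫ (β_ Y (X ⊗ X)).hom =
      ((β_ Y X).hom ▷ X) ≫ (β_ (X ⊗ Y) X).hom ≫ (α_ X X Y).inv ≫ ((β_ X X).hom ▷ Y) := by
    simp only [braiding_tensor_right_hom, braiding_tensor_left_hom, Category.assoc,
      Iso.hom_inv_id_assoc, Category.comp_id, ← comp_whiskerRight, SymmetricCategory.symmetry,
      id_whiskerRight]
  calc
    _ = (λ_ X).inv ≫ (φ ▷ X) ≫ (α_ Y X X).hom ≫ (β_ Y (X ⊗ X)).hom ≫ (ε ▷ Y) ≫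
          (λ_ Y).hom := by
      rw [← braiding_leftUnitor, braiding_naturality_right_assoc]
    _ = (λ_ X).inv ≫ (φ ▷ X) ≫ ((β_ Y X).hom ▷ X) ≫ (β_ (X ⊗ Y) X).hom ≫ (α_ X X Y).inv ≫
          (((β_ X X).hom ≫ ε) ▷ Y) ≫ (λ_ Y).hom := by
      rw [reassoc_of% hexagons, comp_whiskerRight]; simp only [Category.assoc]
    _ = _ := by
      rw [← comp_whiskerRight_assoc, braiding_naturality_left_assoc,
        leftUnitor_inv_braiding_assoc, hε]

namespace Dagger

variable (D : Dagger C)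

theorem dag_assoc_inv (A B E : C) : D.dag (α_ A B E).inv = (α_ A B E).hom := by
  rw [← D.dag_assoc, D.dag_dag]

theorem dag_whiskerLeft (Z : C) {A B : C} (f : A ⟶ B) : D.dag (Z ◁ f) = Z ◁ D.dag f := by
  rw [← id_tensorHom, D.dag_tensor, D.dag_id, id_tensorHom]

theorem dag_whiskerRight {A B : C} (f : A ⟶ B) (Z : C) : D.dag (f ▷ Z) = D.dag f ▷ Z := by
  rw [← tensorHom_id, D.dag_tensor, D.dag_id, tensorHom_id]

end Dagger

namespace ClassicalStructure

variable {D : Dagger C} {Z : C} (S : ClassicalStructure D Z)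

theorem mul_assoc : (α_ Z Z Z).hom ≫ (Z ◁ S.mul) ≫ S.mul = (S.mul ▷ Z) ≫ S.mul := by
  simpa only [id_tensorHom, tensorHom_id] using S.mul_assoc'

theorem comul_assoc : S.comul ≫ (Z ◁ S.comul) ≫ (α_ Z Z Z).inv = S.comul ≫ (S.comul ▷ Z) := by
  simpa only [comul, D.dag_comp, D.dag_whiskerLeft, D.dag_whiskerRight, D.dag_assoc,
    Category.assoc] using congrArg D.dag S.mul_assoc

theorem comul_braiding : S.comul ≫ (β_ Z Z).hom = S.comul := by
  simpa only [comul, D.dag_comp, D.dag_braid, ← SymmetricCategory.braiding_swap_eq_inv_braiding]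
    using congrArg D.dag S.mul_comm'

theorem braiding_eps : (β_ Z Z).hom ≫ S.eps = S.eps := by
  rw [eps, reassoc_of% S.mul_comm']

theorem eta_braiding : S.eta ≫ (β_ Z Z).hom = S.eta := by
  rw [eta, Category.assoc, S.comul_braiding]

theorem comul_whiskerRight_mul :
    (S.comul ▷ Z) ≫ (α_ Z Z Z).hom ≫ (Z ◁ S.mul) = S.mul ≫ S.comul := by
  simpa only [comul, D.dag_comp, D.dag_whiskerLeft, D.dag_whiskerRight, D.dag_assoc_inv,
    D.dag_dag, Category.assoc, id_tensorHom, tensorHom_id] using congrArg D.dag S.frobenius'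

theorem comul_whiskerRight_eps :
    (S.comul ▷ Z) ≫ (α_ Z Z Z).hom ≫ (Z ◁ S.eps) ≫ (ρ_ Z).hom = S.mul := by
  have hcounit : S.comul ≫ (Z ◁ S.counit) = (ρ_ Z).inv := by
    simpa only [comul, counit, D.dag_comp, D.dag_whiskerLeft, D.dag_rUnit, id_tensorHom]
      using congrArg D.dag S.mul_one'
  rw [eps, MonoidalCategory.whiskerLeft_comp, Category.assoc,
    reassoc_of% S.comul_whiskerRight_mul, reassoc_of% hcounit, Iso.inv_hom_id, Category.comp_id]

theorem eta_whiskerRight_mul :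
    (λ_ Z).inv ≫ (S.eta ▷ Z) ≫ (α_ Z Z Z).hom ≫ (Z ◁ S.mul) = S.comul := by
  have hunit : (S.unit ▷ Z) ≫ S.mul = (λ_ Z).hom := by
    simpa only [tensorHom_id] using S.one_mul'
  rw [eta, comp_whiskerRight, Category.assoc, S.comul_whiskerRight_mul, reassoc_of% hunit,
    Iso.inv_hom_id_assoc]

end ClassicalStructure

section ControlledMul

open ClassicalStructure

variable {D : Dagger C} {X Y : C} (XS : ClassicalStructure D X) (YS : ClassicalStructure D Y)

theorem comul_tensorHom_mul_comm (f g : X ⟶ Y) :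
    XS.comul ≫ (f ⊗ₘ g) ≫ YS.mul = XS.comul ≫ (g ⊗ₘ f) ≫ YS.mul := by
  conv_lhs => rw [← XS.comul_braiding, Category.assoc, ← braiding_naturality_assoc, YS.mul_comm']

theorem conjugate_eq_rightTranspose (f : X ⟶ Y) :
    conjugate D XS YS f =
      (ρ_ X).inv ≫ (X ◁ (YS.eta ≫ (D.dag f ▷ Y))) ≫ (α_ X X Y).inv ≫ (XS.eps ▷ Y) ≫
        (λ_ Y).hom := by
  have hleft : conjugate D XS YS f = (λ_ X).inv ≫ ((YS.eta ≫ (Y ◁ D.dag f)) ▷ X) ≫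
      (α_ Y X X).hom ≫ (Y ◁ XS.eps) ≫ (ρ_ Y).hom := by
    simp only [conjugate, id_tensorHom, tensorHom_id, comp_whiskerRight, Category.assoc,
      associator_naturality_middle_assoc]
  rw [hleft, leftTranspose_eq_rightTranspose _ _ XS.braiding_eps, Category.assoc,
    braiding_naturality_right, reassoc_of% YS.eta_braiding]

def controlledMul (f : X ⟶ Y) : X ⊗ Y ⟶ X ⊗ Y :=
  (XS.comul ⊗ₘ 𝟙 Y) ≫ ((𝟙 X ⊗ₘ f) ⊗ₘ 𝟙 Y) ≫ (α_ X Y Y).hom ≫ (𝟙 X ⊗ₘ YS.mul)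

theorem controlledMul_eq (f : X ⟶ Y) :
    controlledMul XS YS f = (XS.comul ▷ Y) ≫ (α_ X X Y).hom ≫ (X ◁ ((f ▷ Y) ≫ YS.mul)) := by
  simp only [controlledMul, id_tensorHom, tensorHom_id, associator_naturality_middle_assoc,
    MonoidalCategory.whiskerLeft_comp]

theorem dag_controlledMul_eq (f : X ⟶ Y) :
    D.dag (controlledMul XS YS f) =
      (X ◁ (YS.comul ≫ (D.dag f ▷ Y))) ≫ (α_ X X Y).inv ≫ (XS.mul ▷ Y) := by
  simp only [controlledMul_eq, comul, D.dag_comp, D.dag_whiskerLeft, D.dag_whiskerRight,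
    D.dag_assoc, D.dag_dag, Category.assoc]

theorem comul_whiskerRight_mul_whiskerRight_mul (f g : X ⟶ Y) :
    (XS.comul ▷ Y) ≫ (α_ X X Y).hom ≫ (X ◁ ((f ▷ Y) ≫ YS.mul)) ≫ (g ▷ Y) ≫ YS.mul =
      ((XS.comul ≫ (g ⊗ₘ f) ≫ YS.mul) ▷ Y) ≫ YS.mul := by
  calc
    _ = (XS.comul ▷ Y) ⊗≫ ((g ▷ X) ▷ Y) ⊗≫ ((Y ◁ f) ▷ Y) ⊗≫
          ((α_ Y Y Y).hom ≫ (Y ◁ YS.mul) ≫ YS.mul) := by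
      rw [whisker_exchange_assoc]; monoidal
    _ = (XS.comul ▷ Y) ⊗≫ ((g ▷ X) ▷ Y) ⊗≫ ((Y ◁ f) ▷ Y) ⊗≫ ((YS.mul ▷ Y) ≫ YS.mul) := by
      rw [YS.mul_assoc]
    _ = _ := by
      rw [MonoidalCategory.tensorHom_def]; monoidal

theorem controlledMul_comp (f g : X ⟶ Y) :
    controlledMul XS YS f ≫ controlledMul XS YS g =
      controlledMul XS YS (XS.comul ≫ (f ⊗ₘ g) ≫ YS.mul) := by
  simp only [controlledMul_eq]
  calc
    _ = (XS.comul ▷ Y) ⊗≫ ((XS.comul ▷ (X ⊗ Y)) ≫ ((X ⊗ X) ◁ ((f ▷ Y) ≫ YS.mul))) ⊗≫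
          (X ◁ ((g ▷ Y) ≫ YS.mul)) := by
      rw [← whisker_exchange]; monoidal
    _ = ((XS.comul ≫ (XS.comul ▷ X)) ▷ Y) ⊗≫ ((X ⊗ X) ◁ ((f ▷ Y) ≫ YS.mul)) ⊗≫
          (X ◁ ((g ▷ Y) ≫ YS.mul)) := by
      monoidal
    _ = ((XS.comul ≫ (X ◁ XS.comul) ≫ (α_ X X X).inv) ▷ Y) ⊗≫
          ((X ⊗ X) ◁ ((f ▷ Y) ≫ YS.mul)) ⊗≫ (X ◁ ((g ▷ Y) ≫ YS.mul)) := by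
      rw [XS.comul_assoc]
    _ = (XS.comul ▷ Y) ⊗≫ X ◁ ((XS.comul ▷ Y) ≫ (α_ X X Y).hom ≫
          (X ◁ ((f ▷ Y) ≫ YS.mul)) ≫ (g ▷ Y) ≫ YS.mul) := by
      monoidal
    _ = _ := by
      rw [comul_whiskerRight_mul_whiskerRight_mul, comul_tensorHom_mul_comm]; monoidal

theorem dag_controlledMul (f : X ⟶ Y) :
    D.dag (controlledMul XS YS f) = controlledMul XS YS (conjugate D XS YS f) := by
  rw [dag_controlledMul_eq, controlledMul_eq, conjugate_eq_rightTranspose]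
  set h := (λ_ Y).inv ≫ ((YS.eta ≫ (D.dag f ▷ Y)) ▷ Y)
  symm
  calc
    _ = ((XS.comul ▷ Y) ≫ ((X ⊗ X) ◁ h)) ⊗≫ (X ◁ (XS.eps ▷ (Y ⊗ Y))) ⊗≫ (X ◁ YS.mul) := by
      monoidal
    _ = ((X ◁ h) ≫ (XS.comul ▷ ((X ⊗ Y) ⊗ Y))) ⊗≫ (X ◁ (XS.eps ▷ (Y ⊗ Y))) ⊗≫
          (X ◁ YS.mul) := by
      rw [← whisker_exchange]
    _ = (X ◁ h) ⊗≫
          (((XS.comul ▷ X) ≫ (α_ X X X).hom ≫ (X ◁ XS.eps) ≫ (ρ_ X).hom) ▷ (Y ⊗ Y)) ⊗≫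
          (X ◁ YS.mul) := by
      monoidal
    _ = (X ◁ h) ⊗≫ ((XS.mul ▷ (Y ⊗ Y)) ≫ (X ◁ YS.mul)) := by
      rw [XS.comul_whiskerRight_eps]; monoidal
    _ = (X ◁ h) ⊗≫ (((X ⊗ X) ◁ YS.mul) ≫ (XS.mul ▷ Y)) := by
      rw [whisker_exchange]
    _ = 𝟙 (X ⊗ Y) ⊗≫ (X ◁ (YS.eta ▷ Y)) ⊗≫ X ◁ ((D.dag f ▷ (Y ⊗ Y)) ≫ (X ◁ YS.mul)) ⊗≫
          (XS.mul ▷ Y) := by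
      monoidal
    _ = 𝟙 (X ⊗ Y) ⊗≫ (X ◁ (YS.eta ▷ Y)) ⊗≫ X ◁ ((Y ◁ YS.mul) ≫ (D.dag f ▷ Y)) ⊗≫
          (XS.mul ▷ Y) := by
      rw [whisker_exchange]
    _ = X ◁ ((λ_ Y).inv ≫ (YS.eta ▷ Y) ≫ (α_ Y Y Y).hom ≫ (Y ◁ YS.mul)) ⊗≫
          X ◁ (D.dag f ▷ Y) ⊗≫ (XS.mul ▷ Y) := by
      monoidal
    _ = _ := by
      rw [YS.eta_whiskerRight_mul]; monoidal

end ControlledMul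

/-- every relation between classical structures is classical. -/
theorem relation_is_classical {X Y : C} (D : Dagger C)
    (XS : ClassicalStructure D X) (YS : ClassicalStructure D Y)
    (r : X ⟶ Y) (hr : IsRelation D XS YS r) :
    IsClassical D XS YS r := by
  refine ⟨X ⊗ Y, controlledMul XS YS r, ?_⟩
  calc controlledMul XS YS r
      = controlledMul XS YS (convol D XS YS r r) := congrArg _ hr
    _ = controlledMul XS YS (conjugate D XS YS r) ≫ controlledMul XS YS r :=
      (controlledMul_comp XS YS _ _).symm
    _ = D.dag (controlledMul XS YS r) ≫ controlledMul XS YS r := by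
      rw [dag_controlledMul]
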